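/- arXiv:1701.07986 — 3 statements merged into one kernel-verified Lean document; each statement's English description precedes it below -/
import Mathlib

section
/- Let v₁,…,v_N and w₁,…,w_N be two N-tuples of points in ℝⁿ. If for every y > 0 the μ-measure of S_y(v₁,…,v_N) = ⋂_{i=1}^N {x ∈ ℝⁿ : 2⟨x,v_i⟩ − ‖v_i‖² ≤ ln y} is at most the μ-measure of S_y(w₁,…,w_N), then P(v₁,…,v_N) ≥ P(w₁,…,w_N). -/
open MeasureTheory Real
open scoped InnerProductSpace ENNReal

/-- The functional `P(v₁,…,v_N) = ∫_{ℝⁿ} max_i exp(−‖x−v_i‖²) dx`. -/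
noncomputable def Pfun {n : ℕ} {ι : Type} [Fintype ι]
    (v : ι → EuclideanSpace ℝ (Fin n)) : ℝ :=
  ∫ x : EuclideanSpace ℝ (Fin n), ⨆ i, Real.exp (-‖x - v i‖ ^ 2)

/-- The measure on `ℝⁿ` with density `e^{−‖x‖²}` with respect to Lebesgue measure. -/
noncomputable def muGauss (n : ℕ) : Measure (EuclideanSpace ℝ (Fin n)) :=
  volume.withDensity fun x => ENNReal.ofReal (Real.exp (-‖x‖ ^ 2))

/-!
Completing the square, `exp (-‖x - v‖²) = exp (-‖x‖²) * exp (2⟪x, v⟫ - ‖v‖²)`, so `P(v)` is the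
`μ`-integral of `G_v x = maxᵢ exp (2⟪x, vᵢ⟫ - ‖vᵢ‖²)`. For `y > 0` the sublevel set `{G_v ≤ y}` is
exactly `S_y(v)`, so the layer cake formula gives `P(v) = ∫_{y > 0} (μ ℝⁿ - μ S_y(v)) dy`, which is
antitone in the measures `μ S_y(v)`.
-/

section InnerProductSpace

variable {E : Type*} [NormedAddCommGroup E] [InnerProductSpace ℝ E] {ι : Type*}

noncomputable def affineExpSup (u : ι → E) (x : E) : ℝ :=
  ⨆ i, rexp (2 * ⟪x, u i⟫_ℝ - ‖u i‖ ^ 2)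

def sublevelSet (u : ι → E) (y : ℝ) : Set E :=
  ⋂ i, {x | 2 * ⟪x, u i⟫_ℝ - ‖u i‖ ^ 2 ≤ Real.log y}

theorem affineExpSup_nonneg (u : ι → E) (x : E) : 0 ≤ affineExpSup u x :=
  Real.iSup_nonneg fun _ => (exp_pos _).le

theorem exp_neg_norm_sub_sq (x v : E) :
    rexp (-‖x - v‖ ^ 2) = rexp (-‖x‖ ^ 2) * rexp (2 * ⟪x, v⟫_ℝ - ‖v‖ ^ 2) := by
  rw [← Real.exp_add, norm_sub_sq_real]
  ring_nf

theorem iSup_exp_neg_norm_sub_sq (u : ι → E) (x : E) :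
    ⨆ i, rexp (-‖x - u i‖ ^ 2) = rexp (-‖x‖ ^ 2) * affineExpSup u x := by
  simp only [affineExpSup, Real.mul_iSup_of_nonneg (exp_pos _).le, ← exp_neg_norm_sub_sq]

theorem setOf_lt_affineExpSup [Finite ι] (u : ι → E) {y : ℝ} (hy : 0 < y) :
    {x | y < affineExpSup u x} = (sublevelSet u y)ᶜ := by
  ext x
  simp only [sublevelSet, affineExpSup, Set.mem_ofPred_eq, Set.mem_compl_iff, Set.mem_iInter,
    Real.le_log_iff_exp_le hy, ← not_le, not_iff_not]
  exact ⟨fun h i => (le_ciSup (Set.finite_range _).bddAbove i).trans h,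
    fun h => Real.iSup_le h hy.le⟩

variable [MeasurableSpace E] [BorelSpace E]

theorem measurable_affineExpSup [Countable ι] (u : ι → E) : Measurable (affineExpSup u) :=
  Measurable.iSup fun i => by fun_prop

theorem measurableSet_sublevelSet [Countable ι] (u : ι → E) (y : ℝ) :
    MeasurableSet (sublevelSet u y) :=
  MeasurableSet.iInter fun i => measurableSet_le (by fun_prop) measurable_const

theorem lintegral_ofReal_affineExpSup [Finite ι] (μ : Measure E) [IsFiniteMeasure μ]
    (u : ι → E) :
    ∫⁻ x, ENNReal.ofReal (affineExpSup u x) ∂μ =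
      ∫⁻ y in Set.Ioi 0, μ Set.univ - μ (sublevelSet u y) := by
  rw [lintegral_eq_lintegral_meas_lt μ (.of_forall (affineExpSup_nonneg u))
    (measurable_affineExpSup u).aemeasurable]
  refine setLIntegral_congr_fun measurableSet_Ioi fun y hy => ?_
  rw [setOf_lt_affineExpSup u hy, measure_compl (measurableSet_sublevelSet u y)
    (measure_ne_top _ _)]

end InnerProductSpace

section Gaussian

variable {V : Type*} [NormedAddCommGroup V] [InnerProductSpace ℝ V] [FiniteDimensional ℝ V]
  [MeasurableSpace V] [BorelSpace V] {ι : Type*}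

theorem integrable_exp_neg_norm_sub_sq (c : V) :
    Integrable fun x : V => rexp (-‖x - c‖ ^ 2) := by
  have h : Integrable fun x : V => rexp (-1 * ‖x‖ ^ 2) :=
    .of_integral_ne_zero <| by
      rw [GaussianFourier.integral_rexp_neg_mul_sq_norm one_pos]
      positivity
  simpa using h.comp_sub_right c

theorem integrable_iSup_exp_neg_norm_sub_sq [Fintype ι] (u : ι → V) :
    Integrable fun x => ⨆ i, rexp (-‖x - u i‖ ^ 2) := by
  refine (integrable_finsetSum Finset.univ fun i _ => integrable_exp_neg_norm_sub_sq (u i)).mono'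
    (Measurable.iSup fun i => by fun_prop).aestronglyMeasurable (.of_forall fun x => ?_)
  rw [Real.norm_of_nonneg (Real.iSup_nonneg fun _ => (exp_pos _).le)]
  exact Real.iSup_le (fun i => Finset.single_le_sum (f := fun j => rexp (-‖x - u j‖ ^ 2))
    (fun j _ => (exp_pos _).le) (Finset.mem_univ i))
    (Finset.sum_nonneg fun j _ => (exp_pos _).le)

end Gaussian

instance isFiniteMeasure_muGauss (n : ℕ) : IsFiniteMeasure (muGauss n) := by
  have h := (integrable_exp_neg_norm_sub_sq (0 : EuclideanSpace ℝ (Fin n))).hasFiniteIntegral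
  simp only [sub_zero] at h
  exact isFiniteMeasure_withDensity_ofReal h

theorem lintegral_iSup_exp_neg_norm_sub_sq {n : ℕ} {ι : Type*} [Countable ι]
    (u : ι → EuclideanSpace ℝ (Fin n)) :
    ∫⁻ x, ENNReal.ofReal (⨆ i, rexp (-‖x - u i‖ ^ 2)) =
      ∫⁻ x, ENNReal.ofReal (affineExpSup u x) ∂muGauss n := by
  rw [muGauss, lintegral_withDensity_eq_lintegral_mul _ (by fun_prop)
    (measurable_affineExpSup u).ennreal_ofReal]
  congr with x
  rw [Pi.mul_apply, iSup_exp_neg_norm_sub_sq, ENNReal.ofReal_mul (exp_pos _).le]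

theorem Pfun_nonneg {n : ℕ} {ι : Type} [Fintype ι] (u : ι → EuclideanSpace ℝ (Fin n)) :
    0 ≤ Pfun u :=
  integral_nonneg fun _ => Real.iSup_nonneg fun _ => (exp_pos _).le

theorem ofReal_Pfun {n : ℕ} {ι : Type} [Fintype ι] (u : ι → EuclideanSpace ℝ (Fin n)) :
    ENNReal.ofReal (Pfun u) =
      ∫⁻ y in Set.Ioi 0, muGauss n Set.univ - muGauss n (sublevelSet u y) := by
  rw [Pfun, ofReal_integral_eq_lintegral_ofReal (integrable_iSup_exp_neg_norm_sub_sq u)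
    (.of_forall fun _ => Real.iSup_nonneg fun _ => (exp_pos _).le),
    lintegral_iSup_exp_neg_norm_sub_sq, lintegral_ofReal_affineExpSup]

theorem stmt2_general (n N : ℕ) (v w : Fin N → EuclideanSpace ℝ (Fin n))
    (h : ∀ y : ℝ, 0 < y →
      muGauss n (⋂ i, {x : EuclideanSpace ℝ (Fin n) |
          2 * ⟪x, v i⟫_ℝ - ‖v i‖ ^ 2 ≤ Real.log y}) ≤
      muGauss n (⋂ i, {x : EuclideanSpace ℝ (Fin n) |
          2 * ⟪x, w i⟫_ℝ - ‖w i‖ ^ 2 ≤ Real.log y})) :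
    Pfun w ≤ Pfun v := by
  rw [← ENNReal.ofReal_le_ofReal_iff (Pfun_nonneg v), ofReal_Pfun, ofReal_Pfun]
  exact setLIntegral_mono' measurableSet_Ioi fun y hy => tsub_le_tsub_left (h y hy) _

theorem stmt2 (n N : ℕ) (hN : 0 < N) (v w : Fin N → EuclideanSpace ℝ (Fin n))
    (h : ∀ y : ℝ, 0 < y →
      muGauss n (⋂ i, {x : EuclideanSpace ℝ (Fin n) |
          2 * ⟪x, v i⟫_ℝ - ‖v i‖ ^ 2 ≤ Real.log y}) ≤
      muGauss n (⋂ i, {x : EuclideanSpace ℝ (Fin n) |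
          2 * ⟪x, w i⟫_ℝ - ‖w i‖ ^ 2 ≤ Real.log y})) :
    Pfun w ≤ Pfun v :=
  stmt2_general n N v w h
end

section
/- Let n ≥ 2, r > 0, let e ∈ ℝⁿ be a unit vector and let 0 < c < r. For a point u on the sphere of radius r with ⟨u,e⟩ = c and t ∈ [0,c], define u_t = t·e + √((r²−t²)/(r²−c²))·(u − c·e) (so ‖u_t‖ = r, ⟨u_t,e⟩ = t, and u_c = u). Then: (i) if u,v both lie on the sphere of radius r with ⟨u,e⟩ = ⟨v,e⟩ = c, the function t ↦ ‖u_t − v_t‖ is nonincreasing on [0,c]; (ii) if additionally w lies on the sphere of radius r with ⟨w,e⟩ ≥ c, then t ↦ ‖u_t − w‖ is nonincreasing on [0,c]. In particular, moving the points of latitude c uniformly down to the equator {x : ⟨x,e⟩ = 0} does not decrease any of these pairwise distances. -/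
open MeasureTheory Real
open scoped InnerProductSpace ENNReal

/-!
Write `u_t = t e + (√(r² - t²) / √(r² - c²)) a` with `a = u - c e ⟂ e`. Then `u_t - v_t` is a
shrinking multiple of `u - v`. For `w` of latitude `d ≥ c`,
`‖u_t - w‖² = 2r² - 2 (t d + q √(r² - t²))` with `q = ⟪a, w⟫ / √(r² - c²)`, and Cauchy–Schwarz
on the components orthogonal to `e` gives `q ≤ √(r² - d²)`. When `q = √(r² - d²)` the bracket is the inner product of the
points `(t, √(r² - t²))` and `(d, √(r² - d²))` of the circle of radius `r`, which grows as `t`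
approaches `d`; a smaller `q` only adds a negative multiple of the decreasing `√(r² - t²)`.
-/

/-- Moving a point `u` of latitude `c` on the sphere of radius `r` down to latitude `t`:
`u_t = t·e + √((r²−t²)/(r²−c²))·(u − c·e)`. -/
noncomputable def moveLat {n : ℕ} (r c : ℝ) (e u : EuclideanSpace ℝ (Fin n)) (t : ℝ) :
    EuclideanSpace ℝ (Fin n) :=
  t • e + Real.sqrt ((r ^ 2 - t ^ 2) / (r ^ 2 - c ^ 2)) • (u - c • e)

lemma antitoneOn_sqrt_sq_sub_sq (r : ℝ) : AntitoneOn (fun t => √(r ^ 2 - t ^ 2)) (Set.Ici 0) :=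
  fun s hs t _ hst => Real.sqrt_le_sqrt (by
    have := pow_le_pow_left₀ (Set.mem_Ici.mp hs) hst 2
    linarith)

lemma monotoneOn_mul_add_sqrt_mul_sqrt {r d : ℝ} (hdr : d ≤ r) :
    MonotoneOn (fun t => t * d + √(r ^ 2 - d ^ 2) * √(r ^ 2 - t ^ 2)) (Set.Icc 0 d) := by
  intro s hs t ht hst
  -- the inner product of two points of the circle is `r²` minus half their squared distance
  have key : ∀ x ∈ Set.Icc 0 d, x * d + √(r ^ 2 - d ^ 2) * √(r ^ 2 - x ^ 2) =
      r ^ 2 - ((d - x) ^ 2 + (√(r ^ 2 - x ^ 2) - √(r ^ 2 - d ^ 2)) ^ 2) / 2 := by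
    intro x hx
    have hd : 0 ≤ d := hx.1.trans hx.2
    have hx2 : √(r ^ 2 - x ^ 2) ^ 2 = r ^ 2 - x ^ 2 := Real.sq_sqrt (by nlinarith [hx.1, hx.2])
    have hd2 : √(r ^ 2 - d ^ 2) ^ 2 = r ^ 2 - d ^ 2 := Real.sq_sqrt (by nlinarith)
    linear_combination (hx2 + hd2) / 2
  have hA := antitoneOn_sqrt_sq_sub_sq r
  have hAt : √(r ^ 2 - d ^ 2) ≤ √(r ^ 2 - t ^ 2) := hA ht.1 (ht.1.trans ht.2) ht.2
  have h1 : (d - t) ^ 2 ≤ (d - s) ^ 2 := pow_le_pow_left₀ (by linarith [ht.2]) (by linarith) 2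
  have h2 : (√(r ^ 2 - t ^ 2) - √(r ^ 2 - d ^ 2)) ^ 2 ≤
      (√(r ^ 2 - s ^ 2) - √(r ^ 2 - d ^ 2)) ^ 2 :=
    pow_le_pow_left₀ (by linarith) (by linarith [hA hs.1 ht.1 hst]) 2
  simp only [key s hs, key t ht]
  linarith

lemma monotoneOn_mul_add_mul_sqrt {r d q : ℝ} (hdr : d ≤ r) (hq : q ≤ √(r ^ 2 - d ^ 2)) :
    MonotoneOn (fun t => t * d + q * √(r ^ 2 - t ^ 2)) (Set.Icc 0 d) := by
  have h : (fun t => t * d + q * √(r ^ 2 - t ^ 2)) = fun t =>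
      (t * d + √(r ^ 2 - d ^ 2) * √(r ^ 2 - t ^ 2)) +
        (q - √(r ^ 2 - d ^ 2)) * √(r ^ 2 - t ^ 2) := by
    ext t; ring
  rw [h]
  refine (monotoneOn_mul_add_sqrt_mul_sqrt hdr).add fun s hs t ht hst => ?_
  exact mul_le_mul_of_nonpos_left
    (antitoneOn_sqrt_sq_sub_sq r hs.1 ht.1 hst) (sub_nonpos.mpr hq)

section UnitVector

variable {E : Type*} [NormedAddCommGroup E] [InnerProductSpace ℝ E] {e : E}

lemma inner_sub_inner_smul_self (he : ‖e‖ = 1) (x : E) : ⟪x - ⟪x, e⟫_ℝ • e, e⟫_ℝ = 0 := by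
  rw [inner_sub_left, real_inner_smul_left, real_inner_self_eq_norm_sq, he]; ring

lemma norm_sub_inner_smul_sq (he : ‖e‖ = 1) (x : E) :
    ‖x - ⟪x, e⟫_ℝ • e‖ ^ 2 = ‖x‖ ^ 2 - ⟪x, e⟫_ℝ ^ 2 := by
  rw [norm_sub_sq_real, real_inner_smul_right, norm_smul, he, Real.norm_eq_abs]
  ring_nf; rw [sq_abs]; ring

lemma inner_sub_inner_smul_le (he : ‖e‖ = 1) (x y : E) :
    ⟪x - ⟪x, e⟫_ℝ • e, y⟫_ℝ ≤ √(‖x‖ ^ 2 - ⟪x, e⟫_ℝ ^ 2) * √(‖y‖ ^ 2 - ⟪y, e⟫_ℝ ^ 2) := by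
  have hy : ⟪x - ⟪x, e⟫_ℝ • e, y⟫_ℝ = ⟪x - ⟪x, e⟫_ℝ • e, y - ⟪y, e⟫_ℝ • e⟫_ℝ := by
    rw [inner_sub_right (y := y), real_inner_smul_right, inner_sub_inner_smul_self he]; ring
  rw [hy, ← norm_sub_inner_smul_sq he, ← norm_sub_inner_smul_sq he,
    Real.sqrt_sq (norm_nonneg _), Real.sqrt_sq (norm_nonneg _)]
  exact real_inner_le_norm _ _

end UnitVector

section MoveLat

variable {n : ℕ} {r c : ℝ} {e u : EuclideanSpace ℝ (Fin n)}

lemma moveLat_eq (hcr : c ^ 2 ≤ r ^ 2) (t : ℝ) :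
    moveLat r c e u t = t • e + (√(r ^ 2 - t ^ 2) / √(r ^ 2 - c ^ 2)) • (u - c • e) := by
  rw [moveLat, Real.sqrt_div' _ (sub_nonneg.mpr hcr)]

lemma norm_moveLat_sub_moveLat (hcr : c ^ 2 ≤ r ^ 2) (v : EuclideanSpace ℝ (Fin n)) (t : ℝ) :
    ‖moveLat r c e u t - moveLat r c e v t‖ = √(r ^ 2 - t ^ 2) / √(r ^ 2 - c ^ 2) * ‖u - v‖ := by
  rw [moveLat_eq hcr, moveLat_eq hcr, ← norm_smul_of_nonneg (by positivity)]
  congr 1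
  module

lemma norm_moveLat_sq (he : ‖e‖ = 1) (hu : ‖u‖ = r) (huc : ⟪u, e⟫_ℝ = c)
    (hcr : c ^ 2 < r ^ 2) {t : ℝ} (ht : t ^ 2 ≤ r ^ 2) : ‖moveLat r c e u t‖ ^ 2 = r ^ 2 := by
  have hperp : ⟪e, u - c • e⟫_ℝ = 0 := by
    rw [real_inner_comm, ← huc, inner_sub_inner_smul_self he]
  have ha : ‖u - c • e‖ ^ 2 = r ^ 2 - c ^ 2 := by rw [← huc, norm_sub_inner_smul_sq he, hu]
  rw [moveLat_eq hcr.le, norm_add_sq_real, real_inner_smul_left, real_inner_smul_right, hperp,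
    norm_smul, norm_smul, he, mul_pow, mul_pow, ha, Real.norm_eq_abs, Real.norm_eq_abs, sq_abs,
    sq_abs, div_pow, Real.sq_sqrt (sub_nonneg.mpr ht), Real.sq_sqrt (sub_nonneg.mpr hcr.le)]
  field_simp [(sub_pos.mpr hcr).ne']
  ring

lemma inner_moveLat_left (hcr : c ^ 2 ≤ r ^ 2) (w : EuclideanSpace ℝ (Fin n)) (t : ℝ) :
    ⟪moveLat r c e u t, w⟫_ℝ =
      t * ⟪w, e⟫_ℝ + ⟪u - c • e, w⟫_ℝ / √(r ^ 2 - c ^ 2) * √(r ^ 2 - t ^ 2) := by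
  rw [moveLat_eq hcr, inner_add_left, real_inner_smul_left, real_inner_smul_left,
    real_inner_comm e]
  ring

end MoveLat

theorem stmt9_general (n : ℕ) (r c : ℝ) (hc0 : 0 < c) (hcr : c < r)
    (e : EuclideanSpace ℝ (Fin n)) (he : ‖e‖ = 1)
    (u v w : EuclideanSpace ℝ (Fin n))
    (hu : ‖u‖ = r) (huc : ⟪u, e⟫_ℝ = c)
    (hw : ‖w‖ = r) (hwc : c ≤ ⟪w, e⟫_ℝ) :
    AntitoneOn (fun t => ‖moveLat r c e u t - moveLat r c e v t‖) (Set.Icc 0 c) ∧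
    AntitoneOn (fun t => ‖moveLat r c e u t - w‖) (Set.Icc 0 c) := by
  have hcr2 : c ^ 2 < r ^ 2 := pow_lt_pow_left₀ hcr hc0.le two_ne_zero
  refine ⟨fun s hs t ht hst => ?_, fun s hs t ht hst => ?_⟩
  · simp only [norm_moveLat_sub_moveLat hcr2.le]
    gcongr ?_ / _ * _
    exact antitoneOn_sqrt_sq_sub_sq r hs.1 ht.1 hst
  · set d := ⟪w, e⟫_ℝ
    set q := ⟪u - c • e, w⟫_ℝ / √(r ^ 2 - c ^ 2)
    have hdr : d ≤ r := (real_inner_le_norm w e).trans (by rw [hw, he, mul_one])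
    have hq : q ≤ √(r ^ 2 - d ^ 2) := by
      rw [div_le_iff₀ (Real.sqrt_pos.mpr (sub_pos.mpr hcr2)), mul_comm]
      simpa only [huc, hu, hw] using inner_sub_inner_smul_le he u w
    have hdist (x : ℝ) (hx : x ∈ Set.Icc 0 c) :
        ‖moveLat r c e u x - w‖ ^ 2 = 2 * r ^ 2 - 2 * (x * d + q * √(r ^ 2 - x ^ 2)) := by
      rw [norm_sub_sq_real, norm_moveLat_sq he hu huc hcr2 (by nlinarith [hx.1, hx.2]),
        inner_moveLat_left hcr2.le, hw]
      ring
    have hf := (monotoneOn_mul_add_mul_sqrt hdr hq).mono (Set.Icc_subset_Icc_right hwc)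
    rw [← sq_le_sq₀ (norm_nonneg _) (norm_nonneg _), hdist t ht, hdist s hs]
    linarith [hf hs ht hst]

/-- Moving points of latitude `c` uniformly down towards the equator does not decrease
(i) the distance between two moved points of latitude `c`, nor
(ii) the distance from a moved point to a fixed point of latitude `≥ c`. -/
theorem stmt9 (n : ℕ) (hn : 2 ≤ n) (r c : ℝ) (hr : 0 < r) (hc0 : 0 < c) (hcr : c < r)
    (e : EuclideanSpace ℝ (Fin n)) (he : ‖e‖ = 1)
    (u v w : EuclideanSpace ℝ (Fin n))
    (hu : ‖u‖ = r) (huc : ⟪u, e⟫_ℝ = c)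
    (hv : ‖v‖ = r) (hvc : ⟪v, e⟫_ℝ = c)
    (hw : ‖w‖ = r) (hwc : c ≤ ⟪w, e⟫_ℝ) :
    AntitoneOn (fun t => ‖moveLat r c e u t - moveLat r c e v t‖) (Set.Icc 0 c) ∧
    AntitoneOn (fun t => ‖moveLat r c e u t - w‖) (Set.Icc 0 c) :=
  stmt9_general n r c hc0 hcr e he u v w hu huc hw hwc
end

section
/- Let ρ : [0,∞) → (0,∞) be a monotone decreasing positive function with ∫₀^{+∞} ρ(t) dt = +∞, and let μ_ρ be the measure on ℝⁿ with density ρ(‖x‖) with respect to Lebesgue measure. Then every unbounded convex subset S ⊆ ℝⁿ with nonempty interior satisfies μ_ρ(S) = +∞. In particular, every degenerate (unbounded) generalized simplex containing a ball has infinite μ_ρ-measure. -/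
/-!
A convex set containing a ball `B(x₀, r)` and points arbitrarily far from `x₀` contains, for every
`k`, a ball of radius `r / 2` whose center lies at distance `k r + r / 2` from `x₀` (shrink the
cone spanned by the ball and a far point). These balls are pairwise disjoint, all have the same
Lebesgue measure, and the density on the `k`-th one is at least `ρ(‖x₀‖ + r + k r)`. Since `ρ` is
nonincreasing, `∑ₖ ρ(b + k r) · r` dominates `∫_b^∞ ρ = ∞`.
-/

open MeasureTheory Metric Set Bornology Function

section Radial

variable {ρ : ℝ → ℝ}

theorem AntitoneOn.setLIntegral_Ioc_le {a b : ℝ} (hρ : AntitoneOn ρ (Icc a b)) :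
    ∫⁻ t in Ioc a b, ENNReal.ofReal (ρ t) ≤ ENNReal.ofReal (ρ a) * ENNReal.ofReal (b - a) :=
  calc ∫⁻ t in Ioc a b, ENNReal.ofReal (ρ t)
      ≤ ∫⁻ _ in Ioc a b, ENNReal.ofReal (ρ a) := setLIntegral_mono measurable_const fun t ht =>
        ENNReal.ofReal_le_ofReal <|
          hρ (left_mem_Icc.2 (ht.1.le.trans ht.2)) (Ioc_subset_Icc_self ht) ht.1.le
    _ = ENNReal.ofReal (ρ a) * ENNReal.ofReal (b - a) := by
        rw [setLIntegral_const, Real.volume_Ioc]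

theorem Ioi_subset_iUnion_Ioc_add_nat_mul (b : ℝ) {r : ℝ} (hr : 0 < r) :
    Ioi b ⊆ ⋃ k : ℕ, Ioc (b + k * r) (b + (k + 1) * r) := by
  intro t ht
  obtain ⟨n, hn⟩ := mem_iUnion.1 ((iUnion_Ioc_add_zsmul hr b).symm ▸ mem_univ t)
  simp only [zsmul_eq_mul, Int.cast_add, Int.cast_one] at hn
  have hn₀ : 0 ≤ n := by
    by_contra! h
    have : ((n : ℝ) + 1) * r ≤ 0 := mul_nonpos_of_nonpos_of_nonneg (by exact_mod_cast h) hr.le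
    linarith [hn.2, mem_Ioi.1 ht]
  lift n to ℕ using hn₀
  exact mem_iUnion.2 ⟨n, by exact_mod_cast hn⟩

theorem AntitoneOn.setLIntegral_Ioi_le_tsum {b r : ℝ} (hρ : AntitoneOn ρ (Ici b)) (hr : 0 < r) :
    ∫⁻ t in Ioi b, ENNReal.ofReal (ρ t) ≤
      (∑' k : ℕ, ENNReal.ofReal (ρ (b + k * r))) * ENNReal.ofReal r :=
  calc ∫⁻ t in Ioi b, ENNReal.ofReal (ρ t)
      ≤ ∑' k : ℕ, ∫⁻ t in Ioc (b + k * r) (b + (k + 1) * r), ENNReal.ofReal (ρ t) :=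
        (lintegral_mono_set (Ioi_subset_iUnion_Ioc_add_nat_mul b hr)).trans
          (lintegral_iUnion_le _ _)
    _ ≤ ∑' k : ℕ, ENNReal.ofReal (ρ (b + k * r)) * ENNReal.ofReal r :=
        ENNReal.tsum_le_tsum fun k => by
          have hsub : Icc (b + k * r) (b + (k + 1) * r) ⊆ Ici b :=
            Icc_subset_Ici_self.trans (Ici_subset_Ici.2 (le_add_of_nonneg_right (by positivity)))
          convert (hρ.mono hsub).setLIntegral_Ioc_le using 3
          ring
    _ = (∑' k : ℕ, ENNReal.ofReal (ρ (b + k * r))) * ENNReal.ofReal r := ENNReal.tsum_mul_right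

theorem AntitoneOn.tsum_ofReal_eq_top (hρ : AntitoneOn ρ (Ici 0))
    (hdiv : ∫⁻ t in Ioi (0 : ℝ), ENNReal.ofReal (ρ t) = ⊤) {b r : ℝ} (hb : 0 ≤ b) (hr : 0 < r) :
    ∑' k : ℕ, ENNReal.ofReal (ρ (b + k * r)) = ⊤ := by
  by_contra hfin
  refine hdiv.not_lt ?_
  calc ∫⁻ t in Ioi (0 : ℝ), ENNReal.ofReal (ρ t)
      = ∫⁻ t in Ioc 0 b ∪ Ioi b, ENNReal.ofReal (ρ t) := by rw [Ioc_union_Ioi_eq_Ioi hb]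
    _ ≤ (∫⁻ t in Ioc 0 b, ENNReal.ofReal (ρ t)) + ∫⁻ t in Ioi b, ENNReal.ofReal (ρ t) :=
        lintegral_union_le (fun t => ENNReal.ofReal (ρ t)) _ _
    _ ≤ ENNReal.ofReal (ρ 0) * ENNReal.ofReal (b - 0) +
          (∑' k : ℕ, ENNReal.ofReal (ρ (b + k * r))) * ENNReal.ofReal r :=
        add_le_add (hρ.mono (Icc_subset_Ici_self : Icc 0 b ⊆ _)).setLIntegral_Ioc_le
          ((hρ.mono (Ici_subset_Ici.2 hb)).setLIntegral_Ioi_le_tsum hr)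
    _ < ⊤ := by finiteness

end Radial

section Convex

variable {E : Type*} [NormedAddCommGroup E] [NormedSpace ℝ E] {S : Set E} {x y : E} {r : ℝ}

theorem Convex.ball_add_smul_sub_subset (hS : Convex ℝ S) (hball : ball x r ⊆ S) (hy : y ∈ S)
    {t : ℝ} (ht₀ : 0 ≤ t) (ht₁ : t < 1) : ball (x + t • (y - x)) ((1 - t) * r) ⊆ S := by
  intro z hz
  have ht : 0 < 1 - t := sub_pos.2 ht₁
  set w := x + (1 - t)⁻¹ • (z - (x + t • (y - x)))
  have hw : w ∈ ball x r := by
    rw [mem_ball, dist_eq_norm, add_sub_cancel_left, norm_smul, norm_inv, Real.norm_of_nonneg ht.le,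
      inv_mul_lt_iff₀ ht, ← dist_eq_norm]
    exact hz
  have hz_eq : (1 - t) • w + t • y = z := by
    simp only [w, smul_add, smul_inv_smul₀ ht.ne']
    module
  exact hz_eq ▸ hS (hball hw) hy ht.le ht₀ (by ring)

theorem Convex.exists_ball_subset_dist_eq_of_not_isBounded (hS : Convex ℝ S)
    (hunb : ¬IsBounded S) (hball : ball x r ⊆ S) (hr : 0 ≤ r) {d : ℝ} (hd : 0 ≤ d) :
    ∃ c, dist c x = d ∧ ball c (r / 2) ⊆ S := by
  obtain ⟨y, hyS, hy⟩ : ∃ y ∈ S, 2 * d < dist y x := by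
    simp only [isBounded_iff_subset_closedBall x, not_exists, not_subset, mem_closedBall,
      not_le] at hunb
    exact hunb (2 * d)
  have hpos : 0 < dist y x := by linarith
  have ht : d / dist y x ≤ 1 / 2 := by rw [div_le_iff₀ hpos]; linarith
  refine ⟨x + (d / dist y x) • (y - x), ?_, ?_⟩
  · rw [dist_eq_norm, add_sub_cancel_left, norm_smul, Real.norm_of_nonneg (by positivity),
      ← dist_eq_norm, div_mul_cancel₀ _ hpos.ne']
  · refine (ball_subset_ball ?_).trans
      (hS.ball_add_smul_sub_subset hball hyS (by positivity) (by linarith))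
    nlinarith

end Convex

theorem pairwise_disjoint_ball_of_dist_eq {α : Type*} [PseudoMetricSpace α] {x : α} {c : ℕ → α}
    {r : ℝ} (hc : ∀ k : ℕ, dist (c k) x = k * r + r / 2) :
    Pairwise (Disjoint on fun k => ball (c k) (r / 2)) := by
  intro j k hjk
  refine ball_disjoint_ball ?_
  have hr : 0 ≤ r := by linarith [hc 0, dist_nonneg (x := c 0) (y := x)]
  have h := abs_dist_sub_le (c j) (c k) x
  rw [hc, hc, abs_le] at h
  rcases hjk.lt_or_gt with hlt | hlt
  · have : (j : ℝ) + 1 ≤ k := by exact_mod_cast hlt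
    nlinarith
  · have : (k : ℝ) + 1 ≤ j := by exact_mod_cast hlt
    nlinarith

theorem AntitoneOn.mul_measure_ball_le_withDensity {E : Type*} [NormedAddCommGroup E]
    [MeasurableSpace E] [OpensMeasurableSpace E] (μ : Measure E) {ρ : ℝ → ℝ}
    (hρ : AntitoneOn ρ (Ici 0)) {c : E} {s R : ℝ} (hR : ‖c‖ + s ≤ R) :
    ENNReal.ofReal (ρ R) * μ (ball c s) ≤
      μ.withDensity (fun x => ENNReal.ofReal (ρ ‖x‖)) (ball c s) := by
  rw [withDensity_apply _ measurableSet_ball, ← setLIntegral_const]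
  refine setLIntegral_mono' measurableSet_ball fun x hx => ENNReal.ofReal_le_ofReal ?_
  have hxR : ‖x‖ ≤ R := by
    linarith [norm_le_norm_add_norm_sub' x c, mem_ball_iff_norm.1 hx]
  exact hρ (norm_nonneg x) ((norm_nonneg x).trans hxR) hxR

theorem stmt10_general (n : ℕ) (ρ : ℝ → ℝ)
    (hmono : AntitoneOn ρ (Set.Ici 0))
    (hdiv : ∫⁻ t in Set.Ioi (0 : ℝ), ENNReal.ofReal (ρ t) = ⊤)
    (S : Set (EuclideanSpace ℝ (Fin n))) (hconv : Convex ℝ S)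
    (hunb : ¬Bornology.IsBounded S) (hint : (interior S).Nonempty) :
    (volume.withDensity fun x : EuclideanSpace ℝ (Fin n) => ENNReal.ofReal (ρ ‖x‖)) S = ⊤ := by
  obtain ⟨x₀, hx₀⟩ := hint
  obtain ⟨r, hr, hball⟩ := Metric.isOpen_iff.1 isOpen_interior x₀ hx₀
  choose c hc hcS using fun k : ℕ =>
    hconv.exists_ball_subset_dist_eq_of_not_isBounded hunb (hball.trans interior_subset) hr.le
      (d := k * r + r / 2) (by positivity)
  have hnorm : ∀ k : ℕ, ‖c k‖ + r / 2 ≤ (‖x₀‖ + r) + k * r := fun k => by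
    linarith [norm_le_norm_add_norm_sub' (c k) x₀, dist_eq_norm (c k) x₀, hc k]
  refine top_le_iff.1 ?_
  calc ⊤ = ∑' k : ℕ, ENNReal.ofReal (ρ ((‖x₀‖ + r) + k * r)) * volume (ball x₀ (r / 2)) := by
        rw [ENNReal.tsum_mul_right, hmono.tsum_ofReal_eq_top hdiv (by positivity) hr,
          ENNReal.top_mul (measure_ball_pos _ _ (by positivity)).ne']
    _ ≤ ∑' k : ℕ, volume.withDensity (fun x => ENNReal.ofReal (ρ ‖x‖)) (ball (c k) (r / 2)) :=
        ENNReal.tsum_le_tsum fun k => by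
          rw [Measure.addHaar_ball_center volume x₀, ← Measure.addHaar_ball_center volume (c k)]
          exact hmono.mul_measure_ball_le_withDensity volume (hnorm k)
    _ = volume.withDensity (fun x => ENNReal.ofReal (ρ ‖x‖)) (⋃ k, ball (c k) (r / 2)) :=
        (measure_iUnion (pairwise_disjoint_ball_of_dist_eq hc) fun _ => measurableSet_ball).symm
    _ ≤ _ := measure_mono (iUnion_subset hcS)

/-- If `ρ` is a positive nonincreasing radial density with divergent integral
`∫₀^∞ ρ = ∞`, then every unbounded convex set with nonempty interior has infinite
measure with respect to the measure with density `ρ(‖x‖)`. -/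
theorem stmt10 (n : ℕ) (ρ : ℝ → ℝ)
    (hpos : ∀ t, 0 ≤ t → 0 < ρ t)
    (hmono : AntitoneOn ρ (Set.Ici 0))
    (hdiv : ∫⁻ t in Set.Ioi (0 : ℝ), ENNReal.ofReal (ρ t) = ⊤)
    (S : Set (EuclideanSpace ℝ (Fin n))) (hconv : Convex ℝ S)
    (hunb : ¬Bornology.IsBounded S) (hint : (interior S).Nonempty) :
    (volume.withDensity fun x : EuclideanSpace ℝ (Fin n) => ENNReal.ofReal (ρ ‖x‖)) S = ⊤ :=
  stmt10_general n ρ hmono hdiv S hconv hunb hint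
end
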